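/- arXiv:2206.13421 — 3 statements merged into one kernel-verified Lean document; each statement's English description precedes it below -/
import Mathlib

section
/- Let V be a pseudovariety of semigroups closed under two-sided Karnofsky–Rhodes expansion. Then every V-projective semigroup is a KR-cover. -/
set_option autoImplicit false

/-! ### General notions: topological semigroups, pseudovarieties, pro-V semigroups -/

/-- Continuity of a map into a type regarded with the discrete topology. -/
def ContinuousDisc {S : Type} [TopologicalSpace S] {T : Type} (f : S → T) : Prop :=
  @Continuous S T _ ⊥ f

/-- A pseudovariety of semigroups: a class of finite semigroups closed under
homomorphic images, subsemigroups and finite direct products. -/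
structure Pseudovariety : Type 1 where
  Mem : ∀ (S : Type) [Semigroup S], Prop
  finite : ∀ (S : Type) [Semigroup S], Mem S → Finite S
  closed_hom : ∀ (S T : Type) [Semigroup S] [Semigroup T] (f : S →ₙ* T),
    Mem S → Function.Surjective f → Mem T
  closed_sub : ∀ (S T : Type) [Semigroup S] [Semigroup T] (f : T →ₙ* S),
    Mem S → Function.Injective f → Mem T
  closed_prod : ∀ (ι : Type) [Finite ι] (S : ι → Type) [∀ i, Semigroup (S i)],
    (∀ i, Mem (S i)) → Mem (∀ i, S i)

/-- A bundled member of a pseudovariety `V` (a finite semigroup belonging to `V`),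
always regarded as carrying the discrete topology. -/
structure SgrIn (V : Pseudovariety) : Type 1 where
  carrier : Type
  [str : Semigroup carrier]
  mem : V.Mem carrier

attribute [instance] SgrIn.str

/-- A (bundled) topological semigroup. -/
structure TopSgr : Type 1 where
  carrier : Type
  [str : Semigroup carrier]
  [top : TopologicalSpace carrier]

attribute [instance] TopSgr.str TopSgr.top

/-- A finite semigroup regarded as a topological semigroup with the discrete topology. -/
def discTopSgr (S : Type) [Semigroup S] : TopSgr :=
  @TopSgr.mk S _ ⊥

/-- A pro-V semigroup: a compact Hausdorff topological semigroup that is residually `V`. -/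
def IsProV (V : Pseudovariety) (S : TopSgr) : Prop :=
  CompactSpace S.carrier ∧ T2Space S.carrier ∧ ContinuousMul S.carrier ∧
    ∀ x y : S.carrier, x ≠ y → ∃ (F : SgrIn V) (f : S.carrier →ₙ* F.carrier),
      ContinuousDisc ⇑f ∧ f x ≠ f y

/-- A profinite semigroup: a compact Hausdorff totally disconnected topological semigroup. -/
def IsProfiniteSgr (S : TopSgr) : Prop :=
  CompactSpace S.carrier ∧ T2Space S.carrier ∧ TotallyDisconnectedSpace S.carrier ∧
    ContinuousMul S.carrier

/-- `C`, together with the continuous homomorphisms `φ i`, is a `V`-coproduct of the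
family `S` of pro-`V` semigroups. -/
structure IsCoproduct (V : Pseudovariety) {I : Type} (S : I → TopSgr)
    (C : TopSgr) (φ : ∀ i, (S i).carrier →ₙ* C.carrier) : Prop where
  proV : IsProV V C
  cont : ∀ i, Continuous ⇑(φ i)
  universal : ∀ (T : TopSgr), IsProV V T →
    ∀ ψ : ∀ i, (S i).carrier →ₙ* T.carrier, (∀ i, Continuous ⇑(ψ i)) →
      ∃! Ψ : C.carrier →ₙ* T.carrier, Continuous ⇑Ψ ∧ ∀ i, Ψ.comp (φ i) = ψ i

/-- `P`, together with the homomorphisms `e i`, is a free product (coproduct in the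
category of semigroups) of the family `S`. -/
structure IsFreeProduct {I : Type} (S : I → Type) [∀ i, Semigroup (S i)]
    (P : Type) [Semigroup P] (e : ∀ i, S i →ₙ* P) : Prop where
  universal : ∀ (T : Type) [Semigroup T] (f : ∀ i, S i →ₙ* T),
    ∃! F : P →ₙ* T, ∀ i, F.comp (e i) = f i

/-! ### Particular pseudovarieties and related notions -/

/-- `V` contains the pseudovariety `Sl` of finite semilattices. -/
def ContainsSl (V : Pseudovariety) : Prop :=
  ∀ (S : Type) [Semigroup S] [Finite S],
    (∀ x y : S, x * y = y * x) → (∀ x : S, x * x = x) → V.Mem S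

/-- Green's `J`-preorder: `s ≤_J t`, i.e. `s ∈ S^I t S^I`. -/
def JBelow {S : Type} [Semigroup S] (s t : S) : Prop :=
  ∃ x y : WithOne S, x * (t : WithOne S) * y = (s : WithOne S)

/-- `V` contains the pseudovariety `J` of finite `J`-trivial semigroups. -/
def ContainsJ (V : Pseudovariety) : Prop :=
  ∀ (S : Type) [Semigroup S] [Finite S],
    (∀ s t : S, JBelow s t → JBelow t s → s = t) → V.Mem S

/-- The preimage of an idempotent under a semigroup homomorphism, as a subsemigroup. -/
def fiberSub {S T : Type} [Semigroup S] [Semigroup T] (ψ : S →ₙ* T) (e : T)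
    (he : e * e = e) : Subsemigroup S where
  carrier := ⇑ψ ⁻¹' {e}
  mul_mem' := by
    intro a b ha hb
    simp only [Set.mem_preimage, Set.mem_singleton_iff] at *
    rw [map_mul, ha, hb, he]

/-- The set of products of `n+1` elements of a semigroup (so `nthProds S 0 = S`). -/
def nthProds (S : Type) [Semigroup S] : ℕ → Set S
  | 0 => Set.univ
  | n + 1 => {x | ∃ a y, y ∈ nthProds S n ∧ x = a * y}

/-- A nilpotent semigroup: it has a zero `z` and some power of the semigroup is `{z}`. -/
def IsNilpotentSgr (S : Type) [Semigroup S] : Prop :=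
  ∃ z : S, (∀ x : S, z * x = z ∧ x * z = z) ∧ ∃ n : ℕ, nthProds S n ⊆ {z}

/-- A generator of the Mal'cev product `N ⓜ V`: a finite semigroup admitting a surjective
homomorphism onto a member of `V` all of whose idempotent fibers are nilpotent. -/
def NMalcevGen (V : Pseudovariety) (S : Type) [Semigroup S] : Prop :=
  Finite S ∧ ∃ (T : SgrIn V) (ψ : S →ₙ* T.carrier), Function.Surjective ψ ∧
    ∀ (e : T.carrier) (he : e * e = e), IsNilpotentSgr (fiberSub ψ e he)

/-- The equality `N ⓜ V = V`: `V` coincides with the smallest pseudovariety containing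
all finite semigroups admitting an `N`-morphism onto some member of `V`. -/
def NMalcevFixed (V : Pseudovariety) : Prop :=
  ∀ (S : Type) [Semigroup S] [Finite S],
    V.Mem S ↔ ∀ U : Pseudovariety,
      (∀ (S' : Type) [Semigroup S'], NMalcevGen V S' → U.Mem S') → U.Mem S

/-- A completely simple semigroup: simple with a primitive idempotent. -/
def IsCompletelySimple (S : Type) [Semigroup S] : Prop :=
  (∀ J : Set S, J.Nonempty → (∀ s x : S, x ∈ J → s * x ∈ J ∧ x * s ∈ J) → J = Set.univ) ∧
  ∃ e : S, e * e = e ∧ ∀ f : S, f * f = f → e * f = f → f * e = f → f = e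

/-- An equidivisible semigroup. -/
def Equidivisible (S : Type) [Semigroup S] : Prop :=
  ∀ u v x y : S, u * v = x * y →
    ∃ t : WithOne S,
      ((x : WithOne S) = (u : WithOne S) * t ∧ t * (y : WithOne S) = (v : WithOne S)) ∨
      ((x : WithOne S) * t = (u : WithOne S) ∧ (y : WithOne S) = t * (v : WithOne S))

/-! ### The two-sided Karnofsky–Rhodes expansion -/

/-- Vertices of the two-sided Cayley graph of `T`: pairs of elements of `T^I`. -/
abbrev KRVtx (T : Type) : Type := WithOne T × WithOne T

/-- Edges of the two-sided Cayley graph: (source, label, target). -/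
abbrev KREdge (A T : Type) : Type := KRVtx T × A × KRVtx T

/-- The image in `T^I` of a letter. -/
def letterImg {A T : Type} [Semigroup T] (ψ : FreeSemigroup A →ₙ* T) (a : A) : WithOne T :=
  (ψ (FreeSemigroup.of a) : WithOne T)

/-- The image in `T^I` of a (possibly empty) word. -/
def wordImg {A T : Type} [Semigroup T] (ψ : FreeSemigroup A →ₙ* T) (w : List A) : WithOne T :=
  (w.map (letterImg ψ)).prod

/-- `e` is an edge of the two-sided Cayley graph `Γ_ψ`. -/
def IsKREdge {A T : Type} [Semigroup T] (ψ : FreeSemigroup A →ₙ* T) (e : KREdge A T) : Prop :=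
  e.1.1 * letterImg ψ e.2.1 = e.2.2.1 ∧ e.1.2 = letterImg ψ e.2.1 * e.2.2.2

/-- One step along an edge of `Γ_ψ` (used to define directed paths). -/
def KRStep {A T : Type} [Semigroup T] (ψ : FreeSemigroup A →ₙ* T) (v w : KRVtx T) : Prop :=
  ∃ a : A, v.1 * letterImg ψ a = w.1 ∧ v.2 = letterImg ψ a * w.2

/-- A transition edge of `Γ_ψ`: an edge from whose target there is no directed path
back to its source. -/
def IsTransEdge {A T : Type} [Semigroup T] (ψ : FreeSemigroup A →ₙ* T) (e : KREdge A T) : Prop :=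
  IsKREdge ψ e ∧ ¬ Relation.ReflTransGen (KRStep ψ) e.2.2 e.1

/-- The list of letters of an element of the free semigroup. -/
def letters {A : Type} (u : FreeSemigroup A) : List A := u.head :: u.tail

/-- The set of edges of the path `p_u` of `Γ_ψ` from `(I, ψ u)` to `(ψ u, I)` labeled by `u`. -/
def pathEdges {A T : Type} [Semigroup T] (ψ : FreeSemigroup A →ₙ* T) (u : FreeSemigroup A) :
    Set (KREdge A T) :=
  {e | ∃ (w₁ w₂ : List A) (a : A), letters u = w₁ ++ a :: w₂ ∧
    e = ((wordImg ψ w₁, wordImg ψ (a :: w₂)), a, (wordImg ψ (w₁ ++ [a]), wordImg ψ w₂))}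

/-- The set `T(p_u)` of transition edges of `Γ_ψ` occurring in the path `p_u`. -/
def transEdges {A T : Type} [Semigroup T] (ψ : FreeSemigroup A →ₙ* T) (u : FreeSemigroup A) :
    Set (KREdge A T) :=
  {e ∈ pathEdges ψ u | IsTransEdge ψ e}

/-- A realization of the two-sided Karnofsky–Rhodes expansion of `ψ : A⁺ → T`:
a semigroup `K = T_ψ^KR` together with the projection `ψ^KR : A⁺ → K`, which is onto and
identifies `u` and `v` exactly when `ψ u = ψ v` and `T(p_u) = T(p_v)`, and the canonical
homomorphism `π : T_ψ^KR → T` with `π ∘ ψ^KR = ψ`. -/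
structure KRExp {A T : Type} [Semigroup T] (ψ : FreeSemigroup A →ₙ* T) : Type 1 where
  K : Type
  [strK : Semigroup K]
  [finK : Finite K]
  ψKR : FreeSemigroup A →ₙ* K
  π : K →ₙ* T
  surj : Function.Surjective ⇑ψKR
  ker : ∀ u v : FreeSemigroup A, ψKR u = ψKR v ↔
    (ψ u = ψ v ∧ transEdges ψ u = transEdges ψ v)
  proj : π.comp ψKR = ψ

attribute [instance] KRExp.strK KRExp.finK

/-- The data of a two-sided Karnofsky–Rhodes expansion of a finite semigroup `T`:
a finite alphabet `A`, an onto homomorphism `ψ : A⁺ → T`, and a realization `T_ψ^KR`. -/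
structure KRData (T : Type) [Semigroup T] : Type 1 where
  A : Type
  [finA : Finite A]
  ψ : FreeSemigroup A →ₙ* T
  surjψ : Function.Surjective ⇑ψ
  E : KRExp ψ

attribute [instance] KRData.finA

/-- `V` is closed under two-sided Karnofsky–Rhodes expansion. -/
def ClosedUnderKR (V : Pseudovariety) : Prop :=
  ∀ (A T : Type) [Finite A] [Semigroup T], V.Mem T →
    ∀ (ψ : FreeSemigroup A →ₙ* T), Function.Surjective ⇑ψ →
      ∀ E : KRExp ψ, V.Mem E.K

/-! ### KR-covers -/

/-- `S` is a KR-cover of the finite semigroup `T`. -/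
def IsKRCoverOf (S : TopSgr) (T : Type) [Semigroup T] [Finite T] : Prop :=
  (∃ φ : S.carrier →ₙ* T, ContinuousDisc ⇑φ ∧ Function.Surjective ⇑φ) ∧
  ∀ φ : S.carrier →ₙ* T, ContinuousDisc ⇑φ → Function.Surjective ⇑φ →
    ∃ (D : KRData T) (φψ : S.carrier →ₙ* D.E.K),
      ContinuousDisc ⇑φψ ∧ D.E.π.comp φψ = φ

/-- `S` is a KR-cover: a KR-cover of each of its finite continuous homomorphic images. -/
def IsKRCover (S : TopSgr) : Prop :=
  ∀ (T : Type) [Semigroup T] [Finite T],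
    (∃ φ : S.carrier →ₙ* T, ContinuousDisc ⇑φ ∧ Function.Surjective ⇑φ) →
    IsKRCoverOf S T

/-- `S` is `V`-projective. -/
def IsVProjective (V : Pseudovariety) (S : TopSgr) : Prop :=
  IsProV V S ∧ ∀ (T R : TopSgr), IsProV V T → IsProV V R →
    ∀ (f : S.carrier →ₙ* T.carrier) (g : R.carrier →ₙ* T.carrier),
      Continuous ⇑f → Continuous ⇑g → Function.Surjective ⇑g →
        ∃ f' : S.carrier →ₙ* R.carrier, Continuous ⇑f' ∧ g.comp f' = f

/-! ### Strong KR-covers and letter super-cancellativity -/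

/-- `κ : A → S` is a generating mapping: its image generates a dense subsemigroup. -/
def GeneratingMap {A : Type} (S : TopSgr) (κ : A → S.carrier) : Prop :=
  Dense (Subsemigroup.closure (Set.range κ) : Set S.carrier)

/-- The homomorphism `A⁺ → T` extending `a ↦ φ (κ a)`. -/
def liftGen {A : Type} (S : TopSgr) (κ : A → S.carrier) {T : Type} [Semigroup T]
    (φ : S.carrier →ₙ* T) : FreeSemigroup A →ₙ* T :=
  FreeSemigroup.lift (fun a => φ (κ a))

/-- `S` is a strong KR-cover of the finite semigroup `T` with respect to the
generating mapping `κ`. -/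
def IsStrongKRCoverOfWrt {A : Type} (S : TopSgr) (κ : A → S.carrier)
    (T : Type) [Semigroup T] [Finite T] : Prop :=
  ∀ φ : S.carrier →ₙ* T, ContinuousDisc ⇑φ → Function.Surjective ⇑φ →
    ∃ (E : KRExp (liftGen S κ φ)) (φκ : S.carrier →ₙ* E.K),
      ContinuousDisc ⇑φκ ∧ E.π.comp φκ = φ ∧
      ∀ a : A, φκ (κ a) = E.ψKR (FreeSemigroup.of a)

/-- `S` is a strong KR-cover of the finite semigroup `T` (with respect to some
generating mapping with finite domain). -/
def IsStrongKRCoverOf (S : TopSgr) (T : Type) [Semigroup T] [Finite T] : Prop :=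
  ∃ A : Type, Finite A ∧ ∃ κ : A → S.carrier, GeneratingMap S κ ∧
    IsStrongKRCoverOfWrt S κ T

/-- `S` is a strong KR-cover: a strong KR-cover of each of its finite continuous
homomorphic images. -/
def IsStrongKRCover (S : TopSgr) : Prop :=
  ∀ (T : Type) [Semigroup T] [Finite T],
    (∃ φ : S.carrier →ₙ* T, ContinuousDisc ⇑φ ∧ Function.Surjective ⇑φ) →
    IsStrongKRCoverOf S T

/-- `S` is letter super-cancellative with respect to the subset `A` of `S`. -/
def IsLSC (S : TopSgr) (A : Set S.carrier) : Prop :=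
  ∀ a ∈ A, ∀ b ∈ A, ∀ u v : WithOne S.carrier,
    (u * (a : WithOne S.carrier) = v * (b : WithOne S.carrier) → a = b ∧ u = v) ∧
    ((a : WithOne S.carrier) * u = (b : WithOne S.carrier) * v → a = b ∧ u = v)

/-! ### `S^I` and inverse limits -/

/-- The sum topology on `S^I = S ∪ {I}`: the point `I` is isolated and `S` keeps
its topology. -/
def withOneTopology (S : Type) [TopologicalSpace S] : TopologicalSpace (WithOne S) where
  IsOpen V := IsOpen ((fun s : S => (s : WithOne S)) ⁻¹' V)
  isOpen_univ := by simp
  isOpen_inter := by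
    intro U V hU hV
    rw [Set.preimage_inter]
    exact hU.inter hV
  isOpen_sUnion := by
    intro s hs
    rw [Set.preimage_sUnion]
    exact isOpen_biUnion hs

/-- `S^I` as a topological semigroup (in fact a monoid): `S` with an isolated identity
adjoined. -/
def withOneTopSgr (S : TopSgr) : TopSgr :=
  @TopSgr.mk (WithOne S.carrier) _ (withOneTopology S.carrier)

/-- The inverse limit of a family of topological semigroups, as a subsemigroup of
the product. -/
def invLimSub {I : Type} [Preorder I] (S : I → TopSgr)
    (f : ∀ i j, j ≤ i → ((S i).carrier →ₙ* (S j).carrier)) :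
    Subsemigroup (∀ i, (S i).carrier) where
  carrier := {x | ∀ i j (h : j ≤ i), f i j h (x i) = x j}
  mul_mem' := by
    intro a b ha hb i j h
    simp only [Pi.mul_apply, map_mul, ha i j h, hb i j h]

/-- The inverse limit as a topological semigroup (with the topology induced from the
product topology). -/
def invLimTopSgr {I : Type} [Preorder I] (S : I → TopSgr)
    (f : ∀ i j, j ≤ i → ((S i).carrier →ₙ* (S j).carrier)) : TopSgr :=
  TopSgr.mk (invLimSub S f)

/-!
A finite continuous image `T` of the pro-`V` semigroup `S` lies in `V`: by compactness, finitely
many continuous maps onto members of `V` separate the fibres of `S → T`, so `T` is a quotient of a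
subsemigroup of their product. For the presentation `ψ : T⁺ → T` the expansion
`π : T_ψ^KR → T` is then an onto map between members of `V`, and projectivity of `S` lifts
`S → T` through it. The expansion exists because the edges of `p_{uv}` are translates of those of
`p_u` and `p_v`, and a translate can only be a transition edge if the original one is; hence
`T(p_{uv})` is determined by `ψ u`, `T(p_u)`, `ψ v`, `T(p_v)`, and `≡_ψ` is a congruence.
-/

lemma ContinuousDisc.isClopen_setOf_ne {X Y : Type} [TopologicalSpace X] {g : X → Y}
    (hg : ContinuousDisc g) : IsClopen {p : X × X | g p.1 ≠ g p.2} := by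
  let _ : TopologicalSpace Y := ⊥
  have : DiscreteTopology Y := ⟨rfl⟩
  exact (isClopen_discrete {q : Y × Y | q.1 ≠ q.2}).preimage
    ((hg.comp continuous_fst).prodMk (hg.comp continuous_snd))

lemma exists_finset_separating_fibers {X ι T : Type} [TopologicalSpace X] [CompactSpace X]
    {Y : ι → Type} (f : ∀ i, X → Y i) (hf : ∀ i, ContinuousDisc (f i))
    (hsep : ∀ x y, x ≠ y → ∃ i, f i x ≠ f i y) {φ : X → T} (hφ : ContinuousDisc φ) :
    ∃ s : Finset ι, ∀ x y, (∀ i ∈ s, f i x = f i y) → φ x = φ y := by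
  have hcover : {p : X × X | φ p.1 ≠ φ p.2} ⊆ ⋃ i, {p : X × X | f i p.1 ≠ f i p.2} := by
    rintro ⟨x, y⟩ hxy
    obtain ⟨i, hi⟩ := hsep x y (fun h => hxy (congrArg φ h))
    exact Set.mem_iUnion.mpr ⟨i, hi⟩
  obtain ⟨s, hs⟩ := hφ.isClopen_setOf_ne.isClosed.isCompact.elim_finite_subcover _
    (fun i => (hf i).isClopen_setOf_ne.isOpen) hcover
  refine ⟨s, fun x y hxy => by_contra fun hne => ?_⟩
  obtain ⟨i, hi, hne'⟩ := Set.mem_iUnion₂.mp (hs (show (x, y) ∈ _ from hne))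
  exact hne' (hxy i hi)

lemma Pseudovariety.mem_of_ker_le (V : Pseudovariety) {X P T : Type} [Semigroup X]
    [Semigroup P] [Semigroup T] (η : X →ₙ* P) (φ : X →ₙ* T) (hP : V.Mem P)
    (hφ : Function.Surjective φ) (hker : ∀ x y, η x = η y → φ x = φ y) : V.Mem T := by
  have hrange : V.Mem η.srange :=
    V.closed_sub _ _ (MulMemClass.subtype η.srange) hP Subtype.coe_injective
  have hsec := Function.surjInv_eq η.srangeRestrict_surjective
  let ρ : η.srange →ₙ* T :=
    { toFun := fun z => φ (Function.surjInv η.srangeRestrict_surjective z)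
      map_mul' := fun z w => by
        rw [← map_mul]
        refine hker _ _ (congrArg Subtype.val (?_ : η.srangeRestrict _ = η.srangeRestrict _))
        rw [map_mul η.srangeRestrict, hsec, hsec, hsec] }
  refine V.closed_hom _ _ ρ hrange fun t => ?_
  obtain ⟨x, rfl⟩ := hφ t
  exact ⟨η.srangeRestrict x, hker _ _ (congrArg Subtype.val (hsec _))⟩

lemma IsProV.mem_of_surjective {V : Pseudovariety} {S : TopSgr} (hS : IsProV V S)
    {T : Type} [Semigroup T] (φ : S.carrier →ₙ* T) (hφc : ContinuousDisc φ)
    (hφs : Function.Surjective φ) : V.Mem T := by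
  obtain ⟨hcompact, -, -, hres⟩ := hS
  choose F f hfc hfne using fun p : {p : S.carrier × S.carrier // p.1 ≠ p.2} => hres _ _ p.2
  obtain ⟨s, hs⟩ := exists_finset_separating_fibers (fun i => f i) hfc
    (fun x y hxy => ⟨⟨(x, y), hxy⟩, hfne _⟩) hφc
  refine V.mem_of_ker_le (MulHom.pi fun i : s => f i) φ
    (V.closed_prod _ _ fun i => (F i).mem) hφs fun x y hxy => hs x y fun i hi => ?_
  exact congrFun hxy ⟨i, hi⟩

lemma isProV_discTopSgr {V : Pseudovariety} {T : Type} [Semigroup T] (hT : V.Mem T) :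
    IsProV V (discTopSgr T) := by
  have : DiscreteTopology (discTopSgr T).carrier := ⟨rfl⟩
  have : Finite (discTopSgr T).carrier := V.finite T hT
  exact ⟨Finite.compactSpace, inferInstance, ⟨continuous_of_discreteTopology⟩,
    fun x y hxy => ⟨⟨T, hT⟩, MulHom.id T, continuous_bot, hxy⟩⟩

lemma List.append_eq_append_cons_iff {α : Type*} {l₁ l₂ w₁ w₂ : List α} {a : α} :
    l₁ ++ l₂ = w₁ ++ a :: w₂ ↔
      (∃ w, l₁ = w₁ ++ a :: w ∧ w₂ = w ++ l₂) ∨ ∃ w, l₂ = w ++ a :: w₂ ∧ w₁ = l₁ ++ w := by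
  rw [eq_comm, List.append_eq_append_iff]
  constructor
  · rintro (⟨w, hl₁, hw⟩ | ⟨w, hw₁, hl₂⟩)
    · rcases List.cons_eq_append_iff.mp hw with ⟨rfl, rfl⟩ | ⟨w', rfl, rfl⟩
      · exact Or.inr ⟨[], rfl, by simpa using hl₁.symm⟩
      · exact Or.inl ⟨w', hl₁, rfl⟩
    · exact Or.inr ⟨w, hl₂, hw₁⟩
  · rintro (⟨w, rfl, rfl⟩ | ⟨w, rfl, rfl⟩)
    · exact Or.inl ⟨a :: w, rfl, rfl⟩
    · exact Or.inr ⟨w, rfl, rfl⟩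

section KRExpansion

variable {A T : Type} [Semigroup T] (ψ : FreeSemigroup A →ₙ* T)

lemma letters_mul (u v : FreeSemigroup A) : letters (u * v) = letters u ++ letters v := rfl

lemma wordImg_append (l₁ l₂ : List A) :
    wordImg ψ (l₁ ++ l₂) = wordImg ψ l₁ * wordImg ψ l₂ := by
  simp [wordImg]

lemma wordImg_letters (u : FreeSemigroup A) : wordImg ψ (letters u) = ((ψ u : T) : WithOne T) := by
  induction u using FreeSemigroup.recOnMul with
  | ih1 a => simp [letters, wordImg, letterImg]
  | ih2 a u iha ihu => rw [letters_mul, wordImg_append, iha, ihu, map_mul, WithOne.coe_mul]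

/-- The edge of `p_u` read at the occurrence of `a` in a factorization `u = w₁ a w₂`. -/
def krPathEdge (w₁ w₂ : List A) (a : A) : KREdge A T :=
  ((wordImg ψ w₁, wordImg ψ (a :: w₂)), a, (wordImg ψ (w₁ ++ [a]), wordImg ψ w₂))

lemma mem_pathEdges {u : FreeSemigroup A} {e : KREdge A T} :
    e ∈ pathEdges ψ u ↔ ∃ w₁ w₂ a, letters u = w₁ ++ a :: w₂ ∧ e = krPathEdge ψ w₁ w₂ a :=
  Iff.rfl

lemma isKREdge_krPathEdge (w₁ w₂ : List A) (a : A) : IsKREdge ψ (krPathEdge ψ w₁ w₂ a) := by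
  simp [IsKREdge, krPathEdge, wordImg]

def rmulE (W : WithOne T) (e : KREdge A T) : KREdge A T :=
  ((e.1.1, e.1.2 * W), e.2.1, (e.2.2.1, e.2.2.2 * W))

def lmulE (U : WithOne T) (e : KREdge A T) : KREdge A T :=
  ((U * e.1.1, e.1.2), e.2.1, (U * e.2.2.1, e.2.2.2))

lemma rmulE_krPathEdge (l w₁ w₂ : List A) (a : A) :
    rmulE (wordImg ψ l) (krPathEdge ψ w₁ w₂ a) = krPathEdge ψ w₁ (w₂ ++ l) a := by
  simp [rmulE, krPathEdge, wordImg, mul_assoc]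

lemma lmulE_krPathEdge (l w₁ w₂ : List A) (a : A) :
    lmulE (wordImg ψ l) (krPathEdge ψ w₁ w₂ a) = krPathEdge ψ (l ++ w₁) w₂ a := by
  simp [lmulE, krPathEdge, wordImg_append]

lemma pathEdges_mul (u v : FreeSemigroup A) :
    pathEdges ψ (u * v) =
      rmulE (ψ v : WithOne T) '' pathEdges ψ u ∪ lmulE (ψ u : WithOne T) '' pathEdges ψ v := by
  ext e
  simp only [← wordImg_letters ψ, Set.mem_union, Set.mem_image, mem_pathEdges]
  rw [letters_mul]
  simp only [List.append_eq_append_cons_iff]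
  constructor
  · rintro ⟨w₁, w₂, a, ⟨w, hu, rfl⟩ | ⟨w, hv, rfl⟩, rfl⟩
    · exact Or.inl ⟨_, ⟨w₁, w, a, hu, rfl⟩, rmulE_krPathEdge ψ _ _ _ _⟩
    · exact Or.inr ⟨_, ⟨w, w₂, a, hv, rfl⟩, lmulE_krPathEdge ψ _ _ _ _⟩
  · rintro (⟨_, ⟨w₁, w₂, a, hu, rfl⟩, rfl⟩ | ⟨_, ⟨w₁, w₂, a, hv, rfl⟩, rfl⟩)
    · exact ⟨w₁, w₂ ++ letters v, a, Or.inl ⟨w₂, hu, rfl⟩, rmulE_krPathEdge ψ _ _ _ _⟩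
    · exact ⟨letters u ++ w₁, w₂, a, Or.inr ⟨w₁, hv, rfl⟩, lmulE_krPathEdge ψ _ _ _ _⟩

lemma isTransEdge_of_map (g : KRVtx T → KRVtx T) (hg : ∀ x y, KRStep ψ x y → KRStep ψ (g x) (g y))
    {e : KREdge A T} (he : IsKREdge ψ e) (h : IsTransEdge ψ (g e.1, e.2.1, g e.2.2)) :
    IsTransEdge ψ e :=
  ⟨he, fun hback => h.2 (Relation.ReflTransGen.lift g hg _ _ hback)⟩

lemma isTransEdge_of_rmulE (W : WithOne T) {e : KREdge A T} (he : IsKREdge ψ e)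
    (h : IsTransEdge ψ (rmulE W e)) : IsTransEdge ψ e :=
  isTransEdge_of_map ψ (fun p => (p.1, p.2 * W))
    (fun _ _ ⟨a, h₁, h₂⟩ => ⟨a, h₁, by rw [h₂, mul_assoc]⟩) he h

lemma isTransEdge_of_lmulE (U : WithOne T) {e : KREdge A T} (he : IsKREdge ψ e)
    (h : IsTransEdge ψ (lmulE U e)) : IsTransEdge ψ e :=
  isTransEdge_of_map ψ (fun p => (U * p.1, p.2))
    (fun _ _ ⟨a, h₁, h₂⟩ => ⟨a, by rw [mul_assoc, h₁], h₂⟩) he h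

lemma transEdges_mul (u v : FreeSemigroup A) :
    transEdges ψ (u * v) =
      {e | e ∈ rmulE (ψ v : WithOne T) '' transEdges ψ u ∧ IsTransEdge ψ e} ∪
      {e | e ∈ lmulE (ψ u : WithOne T) '' transEdges ψ v ∧ IsTransEdge ψ e} := by
  have isKREdge_of_mem {w : FreeSemigroup A} {e : KREdge A T} (he : e ∈ pathEdges ψ w) :
      IsKREdge ψ e := by
    obtain ⟨w₁, w₂, a, -, rfl⟩ := (mem_pathEdges ψ).mp he
    exact isKREdge_krPathEdge ψ w₁ w₂ a
  ext f
  simp only [transEdges, pathEdges_mul, Set.mem_ofPred_eq, Set.mem_union, Set.mem_image]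
  constructor
  · rintro ⟨⟨e, he, rfl⟩ | ⟨e, he, rfl⟩, ht⟩
    · exact Or.inl ⟨⟨e, ⟨he, isTransEdge_of_rmulE ψ _ (isKREdge_of_mem he) ht⟩, rfl⟩, ht⟩
    · exact Or.inr ⟨⟨e, ⟨he, isTransEdge_of_lmulE ψ _ (isKREdge_of_mem he) ht⟩, rfl⟩, ht⟩
  · rintro (⟨⟨e, ⟨he, -⟩, rfl⟩, ht⟩ | ⟨⟨e, ⟨he, -⟩, rfl⟩, ht⟩)
    · exact ⟨Or.inl ⟨e, he, rfl⟩, ht⟩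
    · exact ⟨Or.inr ⟨e, he, rfl⟩, ht⟩

/-- The congruence `≡_ψ` of the Karnofsky–Rhodes expansion. -/
def krCon : Con (FreeSemigroup A) where
  r u v := ψ u = ψ v ∧ transEdges ψ u = transEdges ψ v
  iseqv := ⟨fun _ => ⟨rfl, rfl⟩, fun h => ⟨h.1.symm, h.2.symm⟩,
    fun h h' => ⟨h.1.trans h'.1, h.2.trans h'.2⟩⟩
  mul' h h' := by
    refine ⟨by rw [map_mul, map_mul, h.1, h'.1], ?_⟩
    rw [transEdges_mul, transEdges_mul, h.1, h.2, h'.1, h'.2]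

lemma finite_krCon_quotient [Finite A] [Finite T] : Finite (krCon ψ).Quotient := by
  have : Finite (WithOne T) := inferInstanceAs (Finite (Option T))
  refine Finite.of_injective (β := T × Set (KREdge A T))
    (fun x => Con.liftOn x (fun u => (ψ u, transEdges ψ u))
      (fun _ _ h => Prod.ext h.1 h.2)) ?_
  rintro ⟨u⟩ ⟨v⟩ h
  exact (Con.eq _).mpr ⟨congrArg Prod.fst h, congrArg Prod.snd h⟩

def krExpansion [Finite A] [Finite T] : KRExp ψ where
  K := (krCon ψ).Quotient
  finK := finite_krCon_quotient ψ
  ψKR := (krCon ψ).mkMulHom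
  π :=
    { toFun := fun x => Con.liftOn x ψ (fun _ _ h => h.1)
      map_mul' := by
        rintro ⟨u⟩ ⟨v⟩
        exact map_mul ψ u v }
  surj := Quotient.mk''_surjective
  ker _ _ := Con.eq _
  proj := rfl

lemma KRExp.π_surjective {ψ : FreeSemigroup A →ₙ* T} (E : KRExp ψ)
    (hψ : Function.Surjective ψ) : Function.Surjective E.π := by
  intro t
  obtain ⟨u, rfl⟩ := hψ t
  exact ⟨E.ψKR u, DFunLike.congr_fun E.proj u⟩

end KRExpansion

def KRData.ofFinite (T : Type) [Semigroup T] [Finite T] : KRData T where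
  A := T
  ψ := FreeSemigroup.lift id
  surjψ t := ⟨FreeSemigroup.of t, FreeSemigroup.lift_of id t⟩
  E := krExpansion _

/-- If `V` is closed under two-sided Karnofsky–Rhodes expansion, every
`V`-projective semigroup is a KR-cover. -/
theorem projective_isKRCover (V : Pseudovariety) (hV : ClosedUnderKR V)
    (S : TopSgr) (hS : IsVProjective V S) :
    IsKRCover S := by
  intro T _ _ hex
  refine ⟨hex, fun φ hφc hφs => ?_⟩
  have hT : V.Mem T := hS.1.mem_of_surjective φ hφc hφs
  let D := KRData.ofFinite T
  have hK : V.Mem D.E.K := hV D.A T hT D.ψ D.surjψ D.E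
  obtain ⟨φ', hφ'c, hφ'⟩ := hS.2 (discTopSgr T) (discTopSgr D.E.K) (isProV_discTopSgr hT)
    (isProV_discTopSgr hK) φ D.E.π hφc continuous_bot (D.E.π_surjective D.surjψ)
  exact ⟨D, φ', hφ'c, hφ'⟩
end

section
/- Let π : S → T be an onto homomorphism of finite semigroups such that π⁻¹(e) is an aperiodic subsemigroup of S for every idempotent e of T, and let K be a J-class of T which is a subsemigroup of T. Then there is a subsemigroup K' of S such that the restriction of π to K' is an isomorphism from K' onto K. -/
set_option autoImplicit false

/-!
Choose a subsemigroup `S₀` of `S` minimal among those mapped onto `K`. As `K` is a simple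
semigroup, minimality makes `S₀` simple, so (being finite) every element `x` satisfies
`x * y * z = x` for suitable `z`. Minimality also shows that elements of `S₀` with the same
image are `R`- and `L`-equivalent. An element of `S₀` over an idempotent is aperiodic and lies in
its own stable `R`-class, hence is idempotent, and `H`-equivalent idempotents coincide. Finally,
if `π a = π b`, choose `r` with `a * r * a = a`: then `r * b` and `r * a` lie over the idempotent
`π (r * a)`, so `r * b = r * a` and `a = a * r * a = a * r * b = b`.
-/

section Semigroup

variable {M : Type*} [Semigroup M]

instance MulOpposite.finite [Finite M] : Finite Mᵐᵒᵖ := Finite.of_equiv M MulOpposite.opEquiv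

theorem Finite.exists_isIdempotentElem_mem [Finite M] {s : Set M} (hne : s.Nonempty)
    (hmul : ∀ x ∈ s, ∀ y ∈ s, x * y ∈ s) : ∃ e ∈ s, IsIdempotentElem e := by
  let : TopologicalSpace M := ⊥
  have : DiscreteTopology M := ⟨rfl⟩
  exact exists_idempotent_in_compact_subsemigroup (fun _ => continuous_of_discreteTopology) s hne
    s.toFinite.isCompact hmul

theorem mul_mem_range_mul_left (c : M) {x : M} (hx : x ∈ Set.range (c * ·)) (y : M) :
    x * y ∈ Set.range (c * ·) := by
  obtain ⟨p, rfl⟩ := hx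
  exact ⟨p * y, (mul_assoc c p y).symm⟩

/-- The pairs `(x, y)` with `x * a * y = a` form a subsemigroup of `Mᵐᵒᵖ × M`; an idempotent
`(e, f)` in it satisfies `e * a = e * e * a * f = a` and likewise `a * f = a`. -/
theorem exists_mul_eq_self_of_mul_mul_eq [Finite M] {s t : Set M}
    (hs : ∀ x ∈ s, ∀ y ∈ s, x * y ∈ s) (ht : ∀ x ∈ t, ∀ y ∈ t, x * y ∈ t)
    {a x y : M} (hx : x ∈ s) (hy : y ∈ t) (h : x * a * y = a) :
    (∃ e ∈ s, e * a = a) ∧ ∃ f ∈ t, a * f = a := by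
  obtain ⟨⟨e, f⟩, ⟨he, hf, hef⟩, hidem⟩ := Finite.exists_isIdempotentElem_mem
    (s := {p : Mᵐᵒᵖ × M | p.1.unop ∈ s ∧ p.2 ∈ t ∧ p.1.unop * a * p.2 = a})
    ⟨(MulOpposite.op x, y), hx, hy, h⟩ (by
      rintro ⟨x₁, y₁⟩ ⟨hx₁, hy₁, h₁⟩ ⟨x₂, y₂⟩ ⟨hx₂, hy₂, h₂⟩
      refine ⟨hs _ hx₂ _ hx₁, ht _ hy₁ _ hy₂, ?_⟩
      calc x₂.unop * x₁.unop * a * (y₁ * y₂) = x₂.unop * (x₁.unop * a * y₁) * y₂ := by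
            simp only [mul_assoc]
        _ = a := by rw [h₁, h₂])
  dsimp only at he hf hef
  have hee : e.unop * e.unop = e.unop := congrArg MulOpposite.unop (congrArg Prod.fst hidem)
  have hff : f * f = f := congrArg Prod.snd hidem
  refine ⟨⟨e.unop, he, ?_⟩, ⟨f, hf, ?_⟩⟩
  · calc e.unop * a = e.unop * (e.unop * a * f) := by rw [hef]
      _ = e.unop * e.unop * a * f := by simp only [mul_assoc]
      _ = a := by rw [hee, hef]
  · calc a * f = e.unop * a * (f * f) := by rw [← mul_assoc, hef]
      _ = a := by rw [hff, hef]

theorem IsIdempotentElem.eq_of_eq_mul {e f x y : M} (he : IsIdempotentElem e)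
    (hf : IsIdempotentElem f) (h₁ : e = x * f) (h₂ : f = e * y) : e = f :=
  calc e = x * f * f := by rw [mul_assoc, hf.eq, ← h₁]
    _ = e * (e * y) := by rw [← h₁, ← h₂]
    _ = f := by rw [← mul_assoc, he.eq, ← h₂]

theorem WithOne.exists_coe_eq_pow (x : M) {n : ℕ} (hn : 0 < n) :
    ∃ c : M, (c : WithOne M) = (x : WithOne M) ^ n := by
  induction n, hn using Nat.le_induction with
  | base => exact ⟨x, (pow_one _).symm⟩
  | succ n _ ih =>
    obtain ⟨c, hc⟩ := ih
    exact ⟨c * x, by rw [WithOne.coe_mul, hc, pow_succ]⟩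

theorem WithOne.pow_coe_eq_of_injective {N : Type*} [Semigroup N] {f : M →ₙ* N}
    (hf : Function.Injective f) {x : M} {m n : ℕ}
    (h : (f x : WithOne N) ^ m = (f x : WithOne N) ^ n) :
    (x : WithOne M) ^ m = (x : WithOne M) ^ n :=
  WithOne.mapMulHom_injective hf (by simpa only [map_pow, WithOne.mapMulHom_coe] using h)

end Semigroup

def IsSimpleSemigroup (M : Type*) [Semigroup M] : Prop :=
  ∀ a b : M, ∃ u v : M, u * b * v = a

namespace IsSimpleSemigroup

variable {M : Type*} [Semigroup M] (hM : IsSimpleSemigroup M)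
include hM

theorem op : IsSimpleSemigroup Mᵐᵒᵖ := fun a b => by
  obtain ⟨u, v, h⟩ := hM a.unop b.unop
  exact ⟨MulOpposite.op v, MulOpposite.op u,
    MulOpposite.unop_injective (by simpa [mul_assoc] using h)⟩

variable [Finite M]

theorem exists_mul_mul_eq_self (a b : M) : ∃ z, a * b * z = a := by
  obtain ⟨u, v, h⟩ := hM a (a * b)
  obtain ⟨-, _, ⟨z, rfl⟩, hz⟩ := exists_mul_eq_self_of_mul_mul_eq (s := Set.univ)
    (fun _ _ _ _ => trivial) (fun _ hx _ _ => mul_mem_range_mul_left b hx _) trivial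
    ⟨v, rfl⟩ (by simpa only [mul_assoc] using h)
  exact ⟨z, by rw [mul_assoc, hz]⟩

theorem regular (a : M) : ∃ r, a * r * a = a := by
  obtain ⟨z, hz⟩ := hM.exists_mul_mul_eq_self a a
  obtain ⟨⟨_, ⟨r, rfl⟩, hr⟩, -⟩ := exists_mul_eq_self_of_mul_mul_eq (t := Set.univ)
    (fun _ hx _ _ => mul_mem_range_mul_left a hx _) (fun _ _ _ _ => trivial)
    (a := a) (x := a * (a * z)) (y := z) ⟨a * z, rfl⟩ trivial (by rw [← mul_assoc, hz, hz])
  exact ⟨r, hr⟩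

theorem isIdempotentElem_of_pow_eq_pow_succ {g : M} {n : ℕ} (hn : 0 < n)
    (h : (g : WithOne M) ^ n = (g : WithOne M) ^ (n + 1)) : IsIdempotentElem g := by
  obtain ⟨c, hc⟩ := WithOne.exists_coe_eq_pow g hn
  obtain ⟨z, hz⟩ := hM.exists_mul_mul_eq_self g c
  have hg : (g : WithOne M) = g ^ (n + 1) * z := by
    rw [pow_succ', ← hc, ← WithOne.coe_mul, ← WithOne.coe_mul, hz]
  have hper : (g : WithOne M) * g ^ (n + 1) = g ^ (n + 1) := by rw [← h, ← pow_succ', h]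
  apply WithOne.coe_injective
  calc ((g * g : M) : WithOne M) = g * (g ^ (n + 1) * z) := by rw [WithOne.coe_mul, ← hg]
    _ = g := by rw [← mul_assoc, hper, ← hg]

end IsSimpleSemigroup

def MulHom.IsImageMinimal {M T : Type*} [Semigroup M] [Semigroup T] (φ : M →ₙ* T) : Prop :=
  ∀ B : Subsemigroup M, Set.range φ ⊆ φ '' B → B = ⊤

theorem Subsemigroup.isImageMinimal_domRestrict {S T : Type*} [Semigroup S] [Semigroup T]
    {f : S →ₙ* T} {K : Set T} {S₀ : Subsemigroup S}
    (h : Minimal (fun A : Subsemigroup S => f '' A = K) S₀) :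
    (f.domRestrict S₀).IsImageMinimal := by
  intro B hB
  have hmap : B.map (MulMemClass.subtype S₀) = S₀ := by
    refine h.eq_of_le ?_ (Subsemigroup.map_le_iff_le_comap.2 fun x _ => x.2)
    rw [Subsemigroup.coe_map, Set.image_image]
    refine Set.Subset.antisymm ?_ fun k hk => ?_
    · rintro _ ⟨x, -, rfl⟩
      exact h.prop ▸ ⟨x, x.2, rfl⟩
    · obtain ⟨x, hx, rfl⟩ := h.prop ▸ hk
      exact hB ⟨⟨x, hx⟩, rfl⟩
  refine eq_top_iff.2 fun x _ => ?_
  obtain ⟨y, hy, hyx⟩ := (SetLike.ext_iff.1 hmap x.1).2 x.2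
  rwa [Subtype.ext hyx] at hy

namespace MulHom.IsImageMinimal

variable {M T : Type*} [Semigroup M] [Semigroup T] {φ : M →ₙ* T} (hφ : φ.IsImageMinimal)
include hφ

theorem op : (MulHom.op φ).IsImageMinimal := by
  intro B hB
  have hB' : B.unop = ⊤ := hφ _ <| by
    rintro _ ⟨x, rfl⟩
    obtain ⟨y, hy, hyx⟩ := hB ⟨MulOpposite.op x, rfl⟩
    exact ⟨y.unop, hy, congrArg MulOpposite.unop hyx⟩
  rw [← Subsemigroup.op_unop B, hB']
  exact eq_top_iff.2 fun _ _ => trivial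

theorem isSimpleSemigroup
    (hK : ∀ j ∈ Set.range φ, ∀ k ∈ Set.range φ, ∃ u ∈ Set.range φ, ∃ v ∈ Set.range φ,
      u * j * v = k) :
    IsSimpleSemigroup M := by
  intro a b
  let B : Subsemigroup M :=
    { carrier := {x | ∃ u v, u * b * v = x}
      mul_mem' := by
        rintro _ _ ⟨u, v, rfl⟩ ⟨u', v', rfl⟩
        exact ⟨u, v * (u' * b * v'), by simp only [mul_assoc]⟩ }
  have hB : B = ⊤ := hφ B <| by
    rintro _ ⟨x, rfl⟩
    obtain ⟨_, ⟨u, rfl⟩, _, ⟨v, rfl⟩, h⟩ := hK _ ⟨b, rfl⟩ _ ⟨x, rfl⟩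
    exact ⟨u * b * v, ⟨u, v, rfl⟩, by simp only [map_mul, h]⟩
  exact (hB ▸ Subsemigroup.mem_top a : a ∈ B)

variable [Finite M] (hM : IsSimpleSemigroup M)
include hM

/-- The elements outside `b * M` form a subsemigroup (by stability) with the same image as `M`
when `a ∉ b * M`. -/
theorem exists_eq_mul_right_of_map_eq {a b : M} (h : φ a = φ b) : ∃ u, a = b * u := by
  by_contra! hab
  let B : Subsemigroup M :=
    { carrier := {x | ∀ u, x ≠ b * u}
      mul_mem' := fun {x y} hx _ u hxy => by
        obtain ⟨z, hz⟩ := hM.exists_mul_mul_eq_self x y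
        exact hx (u * z) (by rw [← hz, hxy, mul_assoc]) }
  have hB : B = ⊤ := hφ B <| by
    rintro _ ⟨x, rfl⟩
    by_cases hx : ∃ u, x = b * u
    · obtain ⟨u, rfl⟩ := hx
      refine ⟨a * u, fun w hw => ?_, by simp only [map_mul, h]⟩
      obtain ⟨z, hz⟩ := hM.exists_mul_mul_eq_self a u
      exact hab (w * z) (by rw [← hz, hw, mul_assoc])
    · exact ⟨x, fun u hu => hx ⟨u, hu⟩, rfl⟩
  obtain ⟨z, hz⟩ := hM.exists_mul_mul_eq_self b b
  exact (hB ▸ Subsemigroup.mem_top b : b ∈ B) (b * z) (hz.symm.trans (mul_assoc _ _ _))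

theorem exists_eq_mul_left_of_map_eq {a b : M} (h : φ a = φ b) : ∃ v, a = v * b := by
  obtain ⟨v, hv⟩ := hφ.op.exists_eq_mul_right_of_map_eq hM.op
    (a := MulOpposite.op a) (b := MulOpposite.op b) (congrArg MulOpposite.op h)
  exact ⟨v.unop, congrArg MulOpposite.unop hv⟩

theorem injective
    (hap : ∀ x : M, IsIdempotentElem (φ x) →
      ∃ n : ℕ, 0 < n ∧ (x : WithOne M) ^ n = (x : WithOne M) ^ (n + 1)) :
    Function.Injective φ := by
  intro a b hab
  obtain ⟨r, hr⟩ := hM.regular a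
  obtain ⟨u, rfl⟩ := hφ.exists_eq_mul_right_of_map_eq hM hab.symm
  have hidem : IsIdempotentElem (r * a) := by
    rw [IsIdempotentElem, mul_assoc, ← mul_assoc a, hr]
  have hfib : φ (r * (a * u)) = φ (r * a) := by rw [map_mul, map_mul φ r a, ← hab]
  obtain ⟨n, hn, hpow⟩ := hap _ (by rw [hfib]; exact hidem.map φ)
  obtain ⟨x, hx⟩ := hφ.exists_eq_mul_left_of_map_eq hM hfib
  obtain ⟨y, hy⟩ := hφ.exists_eq_mul_right_of_map_eq hM hfib.symm
  have hg : r * (a * u) = r * a :=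
    (hM.isIdempotentElem_of_pow_eq_pow_succ hn hpow).eq_of_eq_mul hidem hx hy
  calc a = a * r * a := hr.symm
    _ = a * (r * (a * u)) := by rw [hg, mul_assoc]
    _ = a * u := by rw [← mul_assoc, ← mul_assoc, hr]

end MulHom.IsImageMinimal

section JClass

variable {T : Type} [Semigroup T]

theorem JBelow.trans {s t r : T} (h₁ : JBelow s t) (h₂ : JBelow t r) : JBelow s r := by
  obtain ⟨x, y, h₁⟩ := h₁
  obtain ⟨x', y', h₂⟩ := h₂
  exact ⟨x * x', y' * y, by rw [← h₁, ← h₂]; simp only [mul_assoc]⟩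

theorem WithOne.exists_coe_eq_mul_coe_mul (p : WithOne T) (k : T) (q : WithOne T) :
    ∃ u : T, (u : WithOne T) = p * k * q := by
  induction p using WithOne.recOneCoe with
  | one =>
    induction q using WithOne.recOneCoe with
    | one => exact ⟨k, by simp⟩
    | coe q => exact ⟨k * q, by simp⟩
  | coe p =>
    induction q using WithOne.recOneCoe with
    | one => exact ⟨p * k, by simp⟩
    | coe q => exact ⟨p * k * q, by simp⟩

def JClass (t : T) : Set T := {s | JBelow s t ∧ JBelow t s}

/-- Since `k ≤_J k * k * k`, writing `k = p * k * k * k * q` and substituting `k = x * j * y` for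
the middle factor gives `u = p * k * x` and `v = y * k * q` in the `J`-class. -/
theorem exists_mul_mul_eq_of_mem_JClass {t j k : T}
    (hmul : ∀ a ∈ JClass t, ∀ b ∈ JClass t, a * b ∈ JClass t) (hj : j ∈ JClass t)
    (hk : k ∈ JClass t) : ∃ u ∈ JClass t, ∃ v ∈ JClass t, u * j * v = k := by
  obtain ⟨p, q, hpq⟩ : JBelow k (k * k * k) := hk.1.trans (hmul _ (hmul _ hk _ hk) _ hk).2
  obtain ⟨x, y, hxy⟩ : JBelow k j := hk.1.trans hj.2
  obtain ⟨u, hu⟩ := WithOne.exists_coe_eq_mul_coe_mul p k x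
  obtain ⟨v, hv⟩ := WithOne.exists_coe_eq_mul_coe_mul y k q
  have huv : ((u * j * v : T) : WithOne T) = k :=
    calc ((u * j * v : T) : WithOne T) = p * (k * (x * j * y) * k) * q := by
          rw [WithOne.coe_mul, WithOne.coe_mul, hu, hv]; simp only [mul_assoc]
      _ = k := by rw [hxy, ← WithOne.coe_mul, ← WithOne.coe_mul, hpq]
  refine ⟨u, ⟨JBelow.trans ⟨p, x, hu.symm⟩ hk.1, hk.2.trans ⟨1, j * v, ?_⟩⟩,
    v, ⟨JBelow.trans ⟨y, q, hv.symm⟩ hk.1, hk.2.trans ⟨u * j, 1, ?_⟩⟩, WithOne.coe_injective huv⟩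
  all_goals simpa [mul_assoc] using huv

end JClass

theorem retraction_onto_Jclass_general {S T : Type} [Semigroup S] [Finite S]
    [Semigroup T] (π : S →ₙ* T) (hsurj : Function.Surjective ⇑π)
    (hap : ∀ e : T, e * e = e → ∀ x : S, π x = e →
      ∃ n : ℕ, 0 < n ∧ (x : WithOne S) ^ n = (x : WithOne S) ^ (n + 1))
    (K : Set T) (t₀ : T) (hK : K = {s | JBelow s t₀ ∧ JBelow t₀ s})
    (hsub : ∀ a ∈ K, ∀ b ∈ K, a * b ∈ K) :
    ∃ K' : Subsemigroup S, Set.BijOn ⇑π (K' : Set S) K := by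
  have : Finite (Subsemigroup S) := Finite.of_injective _ SetLike.coe_injective
  obtain ⟨S₀, hS₀⟩ := exists_minimal_of_wellFoundedLT (fun A : Subsemigroup S => π '' A = K)
    ⟨{ carrier := π ⁻¹' K, mul_mem' := fun ha hb => by simpa using hsub _ ha _ hb },
      Set.image_preimage_eq K hsurj⟩
  have hφ := Subsemigroup.isImageMinimal_domRestrict hS₀
  have hrange : Set.range (π.domRestrict S₀) = K := by
    rw [← hS₀.prop, Set.image_eq_range]
    rfl
  have hM : IsSimpleSemigroup S₀ := hφ.isSimpleSemigroup <| by
    subst hK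
    rw [hrange]
    exact fun j hj k hk => exists_mul_mul_eq_of_mem_JClass hsub hj hk
  have hinj : Function.Injective (π.domRestrict S₀) := hφ.injective hM fun x hx =>
    (hap _ hx x rfl).imp fun _ ⟨hn, h⟩ =>
      ⟨hn, WithOne.pow_coe_eq_of_injective (MulMemClass.subtype_injective S₀) h⟩
  exact ⟨S₀, hS₀.prop ▸ (Set.injOn_iff_injective.2 hinj).bijOn_image⟩

/-- An onto homomorphism of finite semigroups with aperiodic idempotent
fibers restricts to an isomorphism from some subsemigroup onto any `J`-class that is a
subsemigroup. -/
theorem retraction_onto_Jclass {S T : Type} [Semigroup S] [Finite S]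
    [Semigroup T] [Finite T] (π : S →ₙ* T) (hsurj : Function.Surjective ⇑π)
    (hap : ∀ e : T, e * e = e → ∀ x : S, π x = e →
      ∃ n : ℕ, 0 < n ∧ (x : WithOne S) ^ n = (x : WithOne S) ^ (n + 1))
    (K : Set T) (t₀ : T) (hK : K = {s | JBelow s t₀ ∧ JBelow t₀ s})
    (hsub : ∀ a ∈ K, ∀ b ∈ K, a * b ∈ K) :
    ∃ K' : Subsemigroup S, Set.BijOn ⇑π (K' : Set S) K :=
  retraction_onto_Jclass_general π hsurj hap K t₀ hK hsub
end

section
/- Let T be a finite semigroup and let ψ : A⁺ → T be an onto homomorphism, where A is a finite alphabet. If u,v,x,y ∈ T_ψ^KR satisfy uv = xy, then there exists t ∈ T^I such that either π_ψ(u)t = π_ψ(x) and π_ψ(v) = tπ_ψ(y), or π_ψ(u) = π_ψ(x)t and tπ_ψ(v) = π_ψ(y). -/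
set_option autoImplicit false

-- auxiliary development
namespace KRAEaux
open Relation

variable {A T : Type} [Semigroup T] (ψ : FreeSemigroup A →ₙ* T)

theorem wordImg_append (l₁ l₂ : List A) :
    wordImg ψ (l₁ ++ l₂) = wordImg ψ l₁ * wordImg ψ l₂ := by
  simp [wordImg]

theorem letters_mul (x y : FreeSemigroup A) : letters (x * y) = letters x ++ letters y := rfl

theorem wordImg_letters (u : FreeSemigroup A) :
    wordImg ψ (letters u) = (ψ u : WithOne T) := by
  refine FreeSemigroup.recOnMul u (fun a => ?_) (fun x y hx hy => ?_)
  · simp [letters, wordImg, letterImg, FreeSemigroup.of]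
  · rw [letters_mul, wordImg_append, hx, hy, map_mul, WithOne.coe_mul]

/-- The `k`-th vertex of the path labeled by `w`. -/
def vtx (w : List A) (k : ℕ) : KRVtx T := (wordImg ψ (w.take k), wordImg ψ (w.drop k))

/-- The `k`-th edge of the path labeled by `w`. -/
def edg (w : List A) (k : ℕ) (hk : k < w.length) : KREdge A T :=
  (vtx ψ w k, w[k], vtx ψ w (k + 1))

theorem vtx_fst_succ (w : List A) (k : ℕ) (hk : k < w.length) :
    (vtx ψ w k).1 * letterImg ψ w[k] = (vtx ψ w (k + 1)).1 := by
  have h : w.take (k + 1) = w.take k ++ [w[k]] := by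
    rw [List.take_succ, List.getElem?_eq_getElem hk]; rfl
  simp only [vtx, h, wordImg_append]
  simp [wordImg]

theorem vtx_snd_succ (w : List A) (k : ℕ) (hk : k < w.length) :
    (vtx ψ w k).2 = letterImg ψ w[k] * (vtx ψ w (k + 1)).2 := by
  have h : w.drop k = w[k] :: w.drop (k + 1) := List.drop_eq_getElem_cons hk
  show wordImg ψ (w.drop k) = _
  rw [h, wordImg, List.map_cons, List.prod_cons]
  rfl

theorem isKREdge_edg (w : List A) (k : ℕ) (hk : k < w.length) :
    IsKREdge ψ (edg ψ w k hk) :=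
  ⟨vtx_fst_succ ψ w k hk, vtx_snd_succ ψ w k hk⟩

theorem step_vtx (w : List A) (k : ℕ) (hk : k < w.length) :
    KRStep ψ (vtx ψ w k) (vtx ψ w (k + 1)) :=
  ⟨w[k], vtx_fst_succ ψ w k hk, vtx_snd_succ ψ w k hk⟩

/-- forward travel along the path -/
theorem forward (w : List A) {i j : ℕ} (hij : i ≤ j) (hj : j ≤ w.length) :
    ReflTransGen (KRStep ψ) (vtx ψ w i) (vtx ψ w j) := by
  induction j, hij using Nat.le_induction with
  | base => exact ReflTransGen.refl
  | succ j hij ih =>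
      exact (ih (Nat.le_of_succ_le hj)).tail (step_vtx ψ w j hj)

/-- backward travel along a stretch free of transition edges -/
theorem backward (w : List A) {i j : ℕ} (hij : i ≤ j) (hj : j ≤ w.length)
    (hfree : ∀ k (hk : k < w.length), i ≤ k → k < j → ¬ IsTransEdge ψ (edg ψ w k hk)) :
    ReflTransGen (KRStep ψ) (vtx ψ w j) (vtx ψ w i) := by
  induction j, hij using Nat.le_induction with
  | base => exact ReflTransGen.refl
  | succ j hij ih =>
      have hj' : j < w.length := hj
      have h1 : ¬ IsTransEdge ψ (edg ψ w j hj') :=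
        hfree j hj' hij (Nat.lt_succ_self j)
      have h2 : ReflTransGen (KRStep ψ) (vtx ψ w (j + 1)) (vtx ψ w j) := by
        by_contra hb
        exact h1 ⟨isKREdge_edg ψ w j hj', hb⟩
      refine h2.trans (ih (Nat.le_of_succ_le hj) ?_)
      exact fun k hk hik hkj => hfree k hk hik (Nat.lt_succ_of_lt hkj)

theorem edg_mem_pathEdges (W : FreeSemigroup A) (k : ℕ) (hk : k < (letters W).length) :
    edg ψ (letters W) k hk ∈ pathEdges ψ W := by
  refine ⟨(letters W).take k, (letters W).drop (k + 1), (letters W)[k], ?_, ?_⟩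
  · rw [← List.drop_eq_getElem_cons hk, List.take_append_drop]
  · simp only [edg, vtx]
    rw [← List.drop_eq_getElem_cons hk, List.take_succ, List.getElem?_eq_getElem hk]
    rfl

theorem mem_pathEdges_iff (W : FreeSemigroup A) {e : KREdge A T}
    (he : e ∈ pathEdges ψ W) :
    ∃ k, ∃ hk : k < (letters W).length, e = edg ψ (letters W) k hk := by
  obtain ⟨w₁, w₂, a, hsplit, he⟩ := he
  have hk : w₁.length < (letters W).length := by
    rw [hsplit]; simp
  refine ⟨w₁.length, hk, ?_⟩
  have htake : (letters W).take w₁.length = w₁ := by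
    rw [hsplit, List.take_left]
  have hdrop : (letters W).drop w₁.length = a :: w₂ := by
    rw [hsplit, List.drop_left]
  have h2 : a :: w₂ = (letters W)[w₁.length] :: (letters W).drop (w₁.length + 1) := by
    rw [← hdrop]
    exact List.drop_eq_getElem_cons hk
  injection h2 with hget' hdrop1'
  have hget : (letters W)[w₁.length] = a := hget'.symm
  have hdrop1 : (letters W).drop (w₁.length + 1) = w₂ := hdrop1'.symm
  have htake1 : (letters W).take (w₁.length + 1) = w₁ ++ [a] := by
    rw [List.take_succ, List.getElem?_eq_getElem hk, htake, hget]
    rfl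
  rw [he]
  simp only [edg, vtx, htake, hget, hdrop, hdrop1, htake1]

/-- Main combinatorial lemma. -/
theorem connect (W W' : FreeSemigroup A) (hψ : ψ W = ψ W')
    (hT : transEdges ψ W = transEdges ψ W')
    (m n : ℕ) (hm : m ≤ (letters W).length) (hn : n ≤ (letters W').length) :
    ReflTransGen (KRStep ψ) (vtx ψ (letters W) m) (vtx ψ (letters W') n) ∨
    ReflTransGen (KRStep ψ) (vtx ψ (letters W') n) (vtx ψ (letters W) m) := by
  classical
  set w := letters W with hw
  set w' := letters W' with hw'
  by_contra hc
  push_neg at hc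
  obtain ⟨h₁, h₂⟩ := hc
  -- initial vertices coincide
  have hv0 : vtx ψ w 0 = vtx ψ w' 0 := by
    simp only [vtx, List.take_zero, List.drop_zero, hw, hw', wordImg_letters, hψ]
  -- there is a transition edge strictly before m on w
  have hex : ∃ k, (∃ hk : k < w.length, k < m ∧ IsTransEdge ψ (edg ψ w k hk)) := by
    by_contra hno
    push_neg at hno
    apply h₁
    have hb : ReflTransGen (KRStep ψ) (vtx ψ w m) (vtx ψ w 0) := by
      refine backward ψ w (Nat.zero_le m) hm ?_
      intro k hk _ hkm h
      exact hno k hk hkm h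
    exact hb.trans (hv0 ▸ forward ψ w' (Nat.zero_le n) hn)
  set P : ℕ → Prop := fun k => ∃ hk : k < w.length, k < m ∧ IsTransEdge ψ (edg ψ w k hk)
    with hP
  obtain ⟨k₀, hk₀⟩ := hex
  have hk₀m : k₀ ≤ m := le_of_lt hk₀.2.1
  have hspec : P (Nat.findGreatest P m) := Nat.findGreatest_spec hk₀m hk₀
  set K := Nat.findGreatest P m with hK
  obtain ⟨hKlen, hKm, hKtrans⟩ := hspec
  -- no transition edges strictly between K and m
  have hfree : ∀ k (hk : k < w.length), K + 1 ≤ k → k < m → ¬ IsTransEdge ψ (edg ψ w k hk) := by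
    intro k hk hKk hkm ht
    exact Nat.findGreatest_is_greatest (Nat.lt_of_succ_le hKk) (le_of_lt hkm) ⟨hk, hkm, ht⟩
  have hback : ReflTransGen (KRStep ψ) (vtx ψ w m) (vtx ψ w (K + 1)) :=
    backward ψ w (Nat.succ_le_of_lt hKm) hm hfree
  -- the edge `edg w K` occurs on the path of w'
  have hmem : edg ψ w K hKlen ∈ transEdges ψ W' := by
    rw [← hT]
    exact ⟨edg_mem_pathEdges ψ W K hKlen, hKtrans⟩
  obtain ⟨l, hl, hel⟩ := mem_pathEdges_iff ψ W' hmem.1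
  have hsrc : vtx ψ w K = vtx ψ w' l := congrArg Prod.fst hel
  have htgt : vtx ψ w (K + 1) = vtx ψ w' (l + 1) := congrArg (fun e => e.2.2) hel
  rcases lt_or_ge l n with hln | hln
  · -- l < n : P →* Q
    apply h₁
    have : ReflTransGen (KRStep ψ) (vtx ψ w' (l + 1)) (vtx ψ w' n) :=
      forward ψ w' (Nat.succ_le_of_lt hln) hn
    exact hback.trans (htgt ▸ this)
  · -- n ≤ l : Q →* P
    apply h₂
    have hQsrc : ReflTransGen (KRStep ψ) (vtx ψ w' n) (vtx ψ w' l) :=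
      forward ψ w' hln (le_of_lt hl)
    have hstep : ReflTransGen (KRStep ψ) (vtx ψ w' l) (vtx ψ w' (l + 1)) :=
      ReflTransGen.single (step_vtx ψ w' l hl)
    have hfin : ReflTransGen (KRStep ψ) (vtx ψ w (K + 1)) (vtx ψ w m) :=
      forward ψ w (Nat.succ_le_of_lt hKm) hm
    rw [htgt] at hfin
    exact (hQsrc.trans hstep).trans hfin

/-- Extracting a factor from a path. -/
theorem path_factor {p q : KRVtx T} (h : ReflTransGen (KRStep ψ) p q) :
    ∃ t : WithOne T, p.1 * t = q.1 ∧ p.2 = t * q.2 := by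
  induction h with
  | refl => exact ⟨1, by simp, by simp⟩
  | tail _ hstep ih =>
      obtain ⟨t, ht1, ht2⟩ := ih
      obtain ⟨a, ha1, ha2⟩ := hstep
      exact ⟨t * letterImg ψ a, by rw [← mul_assoc, ht1, ha1],
        by rw [ht2, ha2, mul_assoc]⟩

end KRAEaux

/-- Almost-equidivisibility of the two-sided Karnofsky–Rhodes expansion. -/
theorem KR_almost_equidivisible {A T : Type} [Finite A] [Semigroup T] [Finite T]
    (ψ : FreeSemigroup A →ₙ* T) (hψ : Function.Surjective ⇑ψ) (E : KRExp ψ)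
    (u v x y : E.K) (h : u * v = x * y) :
    ∃ t : WithOne T,
      ((E.π u : WithOne T) * t = (E.π x : WithOne T) ∧
        (E.π v : WithOne T) = t * (E.π y : WithOne T)) ∨
      ((E.π u : WithOne T) = (E.π x : WithOne T) * t ∧
        t * (E.π v : WithOne T) = (E.π y : WithOne T)) := by
  classical
  obtain ⟨u', hu⟩ := E.surj u
  obtain ⟨v', hv⟩ := E.surj v
  obtain ⟨x', hx⟩ := E.surj x
  obtain ⟨y', hy⟩ := E.surj y
  have hprod : E.ψKR (u' * v') = E.ψKR (x' * y') := by
    rw [map_mul, map_mul, hu, hv, hx, hy, h]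
  obtain ⟨hψeq, hTeq⟩ := (E.ker _ _).mp hprod
  have hπ : ∀ z : FreeSemigroup A, E.π (E.ψKR z) = ψ z := fun z =>
    DFunLike.congr_fun E.proj z
  have hπu : E.π u = ψ u' := by rw [← hu, hπ]
  have hπv : E.π v = ψ v' := by rw [← hv, hπ]
  have hπx : E.π x = ψ x' := by rw [← hx, hπ]
  have hπy : E.π y = ψ y' := by rw [← hy, hπ]
  have hP : KRAEaux.vtx ψ (letters (u' * v')) (letters u').length
      = ((ψ u' : WithOne T), (ψ v' : WithOne T)) := by
    simp only [KRAEaux.vtx, KRAEaux.letters_mul, List.take_left, List.drop_left,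
      KRAEaux.wordImg_letters]
  have hQ : KRAEaux.vtx ψ (letters (x' * y')) (letters x').length
      = ((ψ x' : WithOne T), (ψ y' : WithOne T)) := by
    simp only [KRAEaux.vtx, KRAEaux.letters_mul, List.take_left, List.drop_left,
      KRAEaux.wordImg_letters]
  have hm : (letters u').length ≤ (letters (u' * v')).length := by
    rw [KRAEaux.letters_mul, List.length_append]
    exact Nat.le_add_right _ _
  have hn : (letters x').length ≤ (letters (x' * y')).length := by
    rw [KRAEaux.letters_mul, List.length_append]
    exact Nat.le_add_right _ _
  have hcon := KRAEaux.connect ψ (u' * v') (x' * y') hψeq hTeq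
    (letters u').length (letters x').length hm hn
  rw [hP, hQ] at hcon
  rcases hcon with hc | hc
  · obtain ⟨t, ht1, ht2⟩ := KRAEaux.path_factor ψ hc
    exact ⟨t, Or.inl ⟨by rw [hπu, hπx]; exact ht1, by rw [hπv, hπy]; exact ht2⟩⟩
  · obtain ⟨t, ht1, ht2⟩ := KRAEaux.path_factor ψ hc
    exact ⟨t, Or.inr ⟨by rw [hπu, hπx]; exact ht1.symm, by rw [hπv, hπy]; exact ht2.symm⟩⟩
end
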